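/- arXiv:1703.00271 — 2 statements merged into one kernel-verified Lean document; each statement's English description precedes it below -/
import Mathlib

section
/- In the Temperley-Lieb algebra TL_n(δ) with generators e_1,...,e_{n-1}, for |i - j| ≥ 2 and any word w in the generators, the elements e_i e_j and e_j e_i are equal; moreover the Jones-Wenzl projections f_n, defined by f_1 = 1 and f_{n+1} = f_n⊗1 - ([n]/[n+1])·f_n e_n f_n (where δ = [2] = q + q^{-1} and [k] are quantum integers, assumed nonzero for k ≤ n+1), satisfy f_n·e_i = e_i·f_n = 0 for all 1 ≤ i ≤ n-1, and f_n² = f_n. -/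
/-!
The recursion builds `f (n+1)` from `f n` and `e n` alone, so everything follows from an induction
carrying, besides idempotence and `f n * e i = e i * f n = 0` for `i < n`, the relations
`f n e n f n e n = r n • f n e n` and `e n f n e n f n = r n • e n f n` with `r n = [n+1]/[n]`.
Since `[n]/[n+1] * r n = 1`, the correction term makes `f (n+1)` kill `e n`. As `e (n+1)` commutes
with `f n`, the relations `e (n+1)² = [2] e (n+1)` and `e (n+1) e n e (n+1) = e (n+1)` give
`e (n+1) f (n+1) e (n+1) = ([2] - [n]/[n+1]) • f n e (n+1)`, and `[2][n+1] = [n+2] + [n]` turns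
the coefficient into `r (n+1)`.
-/

/-- The quantum integer `[k] = (q^k - q^{-k})/(q - q^{-1})`. -/
noncomputable def qint {F : Type*} [Field F] (q : F) (k : ℤ) : F :=
  (q ^ k - q ^ (-k)) / (q - q⁻¹)

section QuantumInteger

variable {F : Type*} [Field F] {q : F}

theorem sub_inv_ne_zero_of_qint_ne_zero {k : ℤ} (h : qint q k ≠ 0) : q - q⁻¹ ≠ 0 := by
  contrapose! h
  rw [qint, h, div_zero]

@[simp]
theorem qint_zero (q : F) : qint q 0 = 0 := by
  simp [qint]

theorem qint_one (hq : q - q⁻¹ ≠ 0) : qint q 1 = 1 := by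
  rw [qint, zpow_one, zpow_neg_one, div_self hq]

theorem qint_add_two (q : F) (k : ℤ) :
    qint q (k + 2) = (q + q⁻¹) * qint q (k + 1) - qint q k := by
  rcases eq_or_ne q 0 with rfl | hq
  · simp [qint]
  · simp only [qint, neg_add, zpow_add₀ hq, zpow_neg, zpow_one, zpow_two]
    field_simp
    ring

theorem qint_two (hq : q - q⁻¹ ≠ 0) : qint q 2 = q + q⁻¹ := by
  have h := qint_add_two q 0
  rwa [zero_add, zero_add, qint_one hq, mul_one, qint_zero, sub_zero] at h

theorem add_inv_sub_qint_div {k : ℤ} (hk : qint q (k + 1) ≠ 0) :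
    q + q⁻¹ - qint q k / qint q (k + 1) = qint q (k + 2) / qint q (k + 1) := by
  rw [qint_add_two, eq_div_iff hk, sub_mul, div_mul_cancel₀ _ hk]

end QuantumInteger

section Step

variable {R A : Type*} [CommRing R] [Ring A] [Algebra R A] {c r δ : R} {p x y : A}

def jonesWenzlStep (c : R) (p x : A) : A := p - c • (p * x * p)

theorem jonesWenzlStep_mul_eq_zero (h : p * x * p * x = r • (p * x)) (hcr : c * r = 1) :
    jonesWenzlStep c p x * x = 0 := by
  rw [jonesWenzlStep, sub_mul, smul_mul_assoc, h, smul_smul, hcr, one_smul, sub_self]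

theorem mul_jonesWenzlStep_eq_zero (h : x * p * x * p = r • (x * p)) (hcr : c * r = 1) :
    x * jonesWenzlStep c p x = 0 := by
  rw [jonesWenzlStep, mul_sub, mul_smul_comm, ← mul_assoc, ← mul_assoc, h, smul_smul, hcr,
    one_smul, sub_self]

theorem jonesWenzlStep_mul_of_mul_eq_zero (h : p * y = 0) : jonesWenzlStep c p x * y = 0 := by
  simp [jonesWenzlStep, sub_mul, mul_assoc, h]

theorem mul_jonesWenzlStep_of_mul_eq_zero (h : y * p = 0) : y * jonesWenzlStep c p x = 0 := by
  simp [jonesWenzlStep, mul_sub, ← mul_assoc, h]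

theorem jonesWenzlStep_mul_of_isIdempotentElem (hp : IsIdempotentElem p) :
    jonesWenzlStep c p x * p = jonesWenzlStep c p x := by
  simp [jonesWenzlStep, sub_mul, mul_assoc, hp.eq]

theorem mul_jonesWenzlStep_of_isIdempotentElem (hp : IsIdempotentElem p) :
    p * jonesWenzlStep c p x = jonesWenzlStep c p x := by
  simp [jonesWenzlStep, mul_sub, ← mul_assoc, hp.eq]

theorem isIdempotentElem_jonesWenzlStep (hp : IsIdempotentElem p)
    (h : p * x * p * x = r • (p * x)) (hcr : c * r = 1) :
    IsIdempotentElem (jonesWenzlStep c p x) := by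
  have hsp := jonesWenzlStep_mul_of_isIdempotentElem (c := c) (x := x) hp
  calc jonesWenzlStep c p x * jonesWenzlStep c p x
      = jonesWenzlStep c p x * p - c • (jonesWenzlStep c p x * p * x * p) := by
        conv_lhs => arg 2; rw [jonesWenzlStep]
        rw [mul_sub, mul_smul_comm]; simp only [mul_assoc]
    _ = jonesWenzlStep c p x := by
        rw [hsp, jonesWenzlStep_mul_eq_zero h hcr, zero_mul, smul_zero, sub_zero]

theorem Commute.jonesWenzlStep (hp : Commute y p) (hx : Commute y x) :
    Commute y (jonesWenzlStep c p x) :=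
  hp.sub_right (((hp.mul_right hx).mul_right hp).smul_right c)

theorem mul_jonesWenzlStep_mul (hyp : Commute y p) (hp : IsIdempotentElem p)
    (hy : y * y = δ • y) (hyxy : y * x * y = y) :
    y * jonesWenzlStep c p x * y = (δ - c) • (p * y) := by
  have hyy : y * p * y = δ • (p * y) := by
    rw [hyp.eq, mul_assoc, hy, mul_smul_comm]
  have hyxy' : y * (p * x * p) * y = p * y := by
    calc y * (p * x * p) * y = p * (y * x * y) * p := by
          simp only [← mul_assoc, hyp.eq]; simp only [mul_assoc, hyp.eq]
      _ = p * y := by rw [hyxy, mul_assoc, hyp.eq, ← mul_assoc, hp.eq]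
  rw [jonesWenzlStep, mul_sub, sub_mul, mul_smul_comm, smul_mul_assoc, hyy, hyxy', sub_smul]

theorem jonesWenzlStep_mul_mul_mul (hyp : Commute y p) (hp : IsIdempotentElem p)
    (hy : y * y = δ • y) (hyxy : y * x * y = y) :
    jonesWenzlStep c p x * y * jonesWenzlStep c p x * y = (δ - c) • (jonesWenzlStep c p x * y) := by
  calc jonesWenzlStep c p x * y * jonesWenzlStep c p x * y
      = jonesWenzlStep c p x * (y * jonesWenzlStep c p x * y) := by simp only [mul_assoc]
    _ = (δ - c) • (jonesWenzlStep c p x * y) := by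
        rw [mul_jonesWenzlStep_mul hyp hp hy hyxy, mul_smul_comm, ← mul_assoc,
          jonesWenzlStep_mul_of_isIdempotentElem hp]

theorem mul_jonesWenzlStep_mul_mul (hyp : Commute y p) (hp : IsIdempotentElem p)
    (hy : y * y = δ • y) (hyxy : y * x * y = y) :
    y * jonesWenzlStep c p x * y * jonesWenzlStep c p x = (δ - c) • (y * jonesWenzlStep c p x) := by
  rw [mul_jonesWenzlStep_mul hyp hp hy hyxy, smul_mul_assoc, ← hyp.eq, mul_assoc,
    mul_jonesWenzlStep_of_isIdempotentElem hp]

end Step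

section JonesWenzl

variable {R A : Type*} [CommRing R] [Ring A] [Algebra R A] {δ : R} {c r : ℕ → R} {e f : ℕ → A}

theorem commute_jonesWenzl
    (he4 : ∀ i j, 1 ≤ i → 1 ≤ j → (i + 1 < j ∨ j + 1 < i) → e i * e j = e j * e i)
    (hf1 : f 1 = 1) (hf2 : ∀ n, 1 ≤ n → f (n + 1) = jonesWenzlStep (c n) (f n) (e n)) :
    ∀ n, 1 ≤ n → ∀ j, n + 1 ≤ j → Commute (e j) (f n) := by
  intro n hn
  induction n, hn using Nat.le_induction with
  | base => simp [hf1]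
  | succ n hn ih =>
    intro j hj
    rw [hf2 n hn]
    exact (ih j (by omega)).jonesWenzlStep (he4 j n (by omega) hn (Or.inr (by omega)))

theorem jonesWenzl_invariants (hr1 : r 1 = δ) (hcr : ∀ n, 1 ≤ n → c n * r n = 1)
    (hrc : ∀ n, 1 ≤ n → δ - c n = r (n + 1))
    (he1 : ∀ i, 1 ≤ i → e i * e i = δ • e i)
    (he3 : ∀ i, 1 ≤ i → e (i + 1) * e i * e (i + 1) = e (i + 1))
    (he4 : ∀ i j, 1 ≤ i → 1 ≤ j → (i + 1 < j ∨ j + 1 < i) → e i * e j = e j * e i)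
    (hf1 : f 1 = 1) (hf2 : ∀ n, 1 ≤ n → f (n + 1) = jonesWenzlStep (c n) (f n) (e n))
    (n : ℕ) (hn : 1 ≤ n) :
    IsIdempotentElem (f n) ∧ (∀ i, 1 ≤ i → i + 1 ≤ n → f n * e i = 0 ∧ e i * f n = 0) ∧
      f n * e n * f n * e n = r n • (f n * e n) ∧ e n * f n * e n * f n = r n • (e n * f n) := by
  induction n, hn using Nat.le_induction with
  | base =>
    refine ⟨?_, fun i _ hin ↦ absurd hin (by omega), ?_, ?_⟩ <;>
      simp [hf1, he1, hr1, IsIdempotentElem]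
  | succ n hn ih =>
    obtain ⟨hidem, hann, hright, hleft⟩ := ih
    have hcomm := commute_jonesWenzl he4 hf1 hf2 n hn (n + 1) le_rfl
    have he1' := he1 (n + 1) (by omega)
    have he3' := he3 n hn
    rw [hf2 n hn, ← hrc n hn]
    refine ⟨isIdempotentElem_jonesWenzlStep hidem hright (hcr n hn), fun i hi hin ↦ ?_,
      jonesWenzlStep_mul_mul_mul hcomm hidem he1' he3',
      mul_jonesWenzlStep_mul_mul hcomm hidem he1' he3'⟩
    rcases (show i = n ∨ i + 1 ≤ n by omega) with rfl | hin
    · exact ⟨jonesWenzlStep_mul_eq_zero hright (hcr i hn),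
        mul_jonesWenzlStep_eq_zero hleft (hcr i hn)⟩
    · exact ⟨jonesWenzlStep_mul_of_mul_eq_zero (hann i hi hin).1,
        mul_jonesWenzlStep_of_mul_eq_zero (hann i hi hin).2⟩

end JonesWenzl

theorem jones_wenzl_general {F : Type*} [Field F] {A : Type*} [Ring A] [Algebra F A]
    (q : F)
    (hqi : ∀ k : ℕ, 1 ≤ k → qint q k ≠ 0)
    (e : ℕ → A) (f : ℕ → A)
    (he1 : ∀ i, 1 ≤ i → e i * e i = (q + q⁻¹) • e i)
    (he3 : ∀ i, 1 ≤ i → e (i + 1) * e i * e (i + 1) = e (i + 1))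
    (he4 : ∀ i j, 1 ≤ i → 1 ≤ j → (i + 1 < j ∨ j + 1 < i) → e i * e j = e j * e i)
    (hf1 : f 1 = 1)
    (hf2 : ∀ n, 1 ≤ n → f (n + 1) = f n - (qint q n / qint q (n + 1)) • (f n * e n * f n)) :
    (∀ i j, 1 ≤ i → 1 ≤ j → (i + 1 < j ∨ j + 1 < i) → e i * e j = e j * e i) ∧
    (∀ n i, 1 ≤ i → i + 1 ≤ n → f n * e i = 0 ∧ e i * f n = 0) ∧
    (∀ n, 1 ≤ n → f n * f n = f n) := by
  have hq : q - q⁻¹ ≠ 0 := sub_inv_ne_zero_of_qint_ne_zero (hqi 1 le_rfl)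
  have hqi' (n : ℕ) : qint q ((n : ℤ) + 1) ≠ 0 := mod_cast hqi (n + 1) (by omega)
  have hinv := jonesWenzl_invariants (c := fun n : ℕ ↦ qint q n / qint q (n + 1))
    (r := fun n : ℕ ↦ qint q (n + 1) / qint q n)
    (by simp [one_add_one_eq_two, qint_two hq, qint_one hq])
    (fun n hn ↦ by field_simp [hqi n hn, hqi' n])
    (fun n _ ↦ by push_cast; rw [add_inv_sub_qint_div (hqi' n), add_assoc, one_add_one_eq_two])
    he1 he3 he4 hf1 hf2
  exact ⟨he4, fun n i hi hin ↦ (hinv n (by omega)).2.1 i hi hin, fun n hn ↦ (hinv n hn).1⟩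

/-- In the Temperley-Lieb algebra `TL(δ)`, `δ = q + q⁻¹`, with generators `e i` (`i ≥ 1`)
and Jones-Wenzl projections `f n` defined by `f 1 = 1`,
`f (n+1) = f n - ([n]/[n+1])·(f n · e n · f n)`, we have: distant generators commute,
`f n · e i = e i · f n = 0` for `1 ≤ i ≤ n-1`, and `f n` is idempotent. -/
theorem jones_wenzl {F : Type*} [Field F] {A : Type*} [Ring A] [Algebra F A]
    (q : F) (hq0 : q ≠ 0) (hq1 : q ^ 2 ≠ 1)
    (hqi : ∀ k : ℕ, 1 ≤ k → qint q k ≠ 0)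
    (e : ℕ → A) (f : ℕ → A)
    (he1 : ∀ i, 1 ≤ i → e i * e i = (q + q⁻¹) • e i)
    (he2 : ∀ i, 1 ≤ i → e i * e (i + 1) * e i = e i)
    (he3 : ∀ i, 1 ≤ i → e (i + 1) * e i * e (i + 1) = e (i + 1))
    (he4 : ∀ i j, 1 ≤ i → 1 ≤ j → (i + 1 < j ∨ j + 1 < i) → e i * e j = e j * e i)
    (hf1 : f 1 = 1)
    (hf2 : ∀ n, 1 ≤ n → f (n + 1) = f n - (qint q n / qint q (n + 1)) • (f n * e n * f n)) :
    (∀ i j, 1 ≤ i → 1 ≤ j → (i + 1 < j ∨ j + 1 < i) → e i * e j = e j * e i) ∧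
    (∀ n i, 1 ≤ i → i + 1 ≤ n → f n * e i = 0 ∧ e i * f n = 0) ∧
    (∀ n, 1 ≤ n → f n * f n = f n) :=
  jones_wenzl_general q hqi e f he1 he3 he4 hf1 hf2
end

section
/- With X the 2-dimensional Ū_q(sl_2)-module and e_i := 1^{⊗(i-1)} ⊗ e ⊗ 1^{⊗(n-i-1)} acting on X^{⊗n}, the operators e_1, ..., e_{n-1} satisfy the Temperley-Lieb relations: e_i² = (q+q^{-1})·e_i, e_i e_{i±1} e_i = e_i, and e_i e_j = e_j e_i for |i-j| > 1. -/
/-- The `n`-fold tensor power `X^{⊗n}` of `X = ℂ²`, as functions on bit strings. -/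
abbrev V (n : ℕ) := (Fin n → Fin 2) → ℂ

/-- The Temperley-Lieb generator acting on the tensor factors at positions `a` and `b`:
locally `ν₀⊗ν₀ ↦ 0`, `ν₁⊗ν₁ ↦ 0`, `ν₀⊗ν₁ ↦ q ν₀⊗ν₁ - ν₁⊗ν₀`,
`ν₁⊗ν₀ ↦ q⁻¹ ν₁⊗ν₀ - ν₀⊗ν₁`. -/
noncomputable def eAt (q : ℂ) (n : ℕ) (a b : Fin n) (v : V n) : V n := fun s =>
  if s a = s b then 0
  else (if s a = 0 then q else q⁻¹) * v s - v (s ∘ Equiv.swap a b)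

/-- `e_i := 1^{⊗(i)} ⊗ e ⊗ 1^{⊗(n-i-2)}`, acting on the tensor factors at (0-based)
positions `i` and `i+1` of `X^{⊗n}`. -/
noncomputable def TLgen (q : ℂ) (n i : ℕ) (h : i + 1 < n) : V n → V n :=
  eAt q n ⟨i, Nat.lt_of_succ_lt h⟩ ⟨i + 1, h⟩


lemma fin2 (z : Fin 2) : z = 0 ∨ z = 1 := by omega

lemma eAt_sq (q : ℂ) (hq : q ≠ 0) {n} {a b : Fin n} (hab : a ≠ b) (v : V n) :
    eAt q n a b (eAt q n a b v) = (q + q⁻¹) • eAt q n a b v := by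
  funext s
  simp only [eAt, Pi.smul_apply, smul_eq_mul, Function.comp_def, Equiv.swap_apply_left,
    Equiv.swap_apply_right, Equiv.swap_apply_self]
  by_cases h : s a = s b
  · simp [h]
  · rcases fin2 (s a) with h0 | h0 <;> rcases fin2 (s b) with h1 | h1 <;>
      simp_all <;> field_simp <;> ring

lemma eAt_braid1 (q : ℂ) (hq : q ≠ 0) {n} {a b c : Fin n}
    (hab : a ≠ b) (hac : a ≠ c) (hbc : b ≠ c) (v : V n) :
    eAt q n a b (eAt q n b c (eAt q n a b v)) = eAt q n a b v := by
  funext s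
  simp only [eAt, Function.comp_def, Equiv.swap_apply_left, Equiv.swap_apply_right,
    Equiv.swap_apply_self, Equiv.swap_apply_of_ne_of_ne, hab, hac, hbc,
    hab.symm, hac.symm, hbc.symm, Ne, not_false_iff]
  by_cases h : s a = s b
  · simp [h]
  · rcases fin2 (s a) with h0 | h0 <;> rcases fin2 (s b) with h1 | h1 <;>
      rcases fin2 (s c) with h2 | h2 <;> simp_all <;> field_simp <;> ring

lemma eAt_braid2 (q : ℂ) (hq : q ≠ 0) {n} {a b c : Fin n}
    (hab : a ≠ b) (hac : a ≠ c) (hbc : b ≠ c) (v : V n) :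
    eAt q n a b (eAt q n c a (eAt q n a b v)) = eAt q n a b v := by
  funext s
  simp only [eAt, Function.comp_def, Equiv.swap_apply_left, Equiv.swap_apply_right,
    Equiv.swap_apply_self, Equiv.swap_apply_of_ne_of_ne, hab, hac, hbc,
    hab.symm, hac.symm, hbc.symm, Ne, not_false_iff]
  by_cases h : s a = s b
  · simp [h]
  · rcases fin2 (s a) with h0 | h0 <;> rcases fin2 (s b) with h1 | h1 <;>
      rcases fin2 (s c) with h2 | h2 <;> simp_all <;> field_simp <;> ring

lemma swap_comm' {α} [DecidableEq α] {a b c d : α} (h1 : a ≠ c) (h2 : a ≠ d)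
    (h3 : b ≠ c) (h4 : b ≠ d) (x : α) :
    Equiv.swap a b (Equiv.swap c d x) = Equiv.swap c d (Equiv.swap a b x) := by
  simp only [Equiv.swap_apply_def]
  split_ifs <;> simp_all

lemma eAt_comm (q : ℂ) {n} {a b c d : Fin n} (h1 : a ≠ c) (h2 : a ≠ d)
    (h3 : b ≠ c) (h4 : b ≠ d) (v : V n) :
    eAt q n a b (eAt q n c d v) = eAt q n c d (eAt q n a b v) := by
  funext s
  simp only [eAt, Function.comp_def, Equiv.swap_apply_left, Equiv.swap_apply_right,
    Equiv.swap_apply_of_ne_of_ne, h1, h2, h3, h4, h1.symm, h2.symm, h3.symm, h4.symm,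
    Ne, not_false_iff]
  rw [show (fun x => s (Equiv.swap c d (Equiv.swap a b x)))
      = fun x => s (Equiv.swap a b (Equiv.swap c d x)) from
    funext fun x => congrArg s (swap_comm' h1.symm h3.symm h2.symm h4.symm x)]
  by_cases hab : s a = s b <;> by_cases hcd : s c = s d <;>
    rcases fin2 (s a) with h0 | h0 <;> rcases fin2 (s c) with h2 | h2 <;> simp_all <;> ring


/-- The operators `e_1, …, e_{n-1}` on `X^{⊗n}` satisfy the Temperley-Lieb relations
`e_i² = (q+q⁻¹)·e_i`, `e_i e_{i±1} e_i = e_i`, and `e_i e_j = e_j e_i` for `|i-j| > 1`. -/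
theorem TL_relations_on_tensor_power (q : ℂ) (hq0 : q ≠ 0) (hq1 : q ^ 2 ≠ 1) (n : ℕ) :
    (∀ (i : ℕ) (h : i + 1 < n) (v : V n),
      TLgen q n i h (TLgen q n i h v) = (q + q⁻¹) • TLgen q n i h v) ∧
    (∀ (i : ℕ) (h : i + 2 < n) (v : V n),
      TLgen q n i (by omega) (TLgen q n (i + 1) h (TLgen q n i (by omega) v)) =
        TLgen q n i (by omega) v) ∧
    (∀ (i : ℕ) (h : i + 2 < n) (v : V n),
      TLgen q n (i + 1) h (TLgen q n i (by omega) (TLgen q n (i + 1) h v)) =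
        TLgen q n (i + 1) h v) ∧
    (∀ (i j : ℕ) (hi : i + 1 < n) (hj : j + 1 < n), (i + 1 < j ∨ j + 1 < i) →
      ∀ v : V n, TLgen q n i hi (TLgen q n j hj v) = TLgen q n j hj (TLgen q n i hi v)) := by
  refine ⟨fun i h v => ?_, fun i h v => ?_, fun i h v => ?_, fun i j hi hj hij v => ?_⟩
  · exact eAt_sq q hq0 (by simp only [ne_eq, Fin.mk.injEq]; omega) v
  · exact eAt_braid1 q hq0 (by simp only [ne_eq, Fin.mk.injEq]; omega)
      (by simp only [ne_eq, Fin.mk.injEq]; omega) (by simp only [ne_eq, Fin.mk.injEq]; omega) v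
  · exact eAt_braid2 q hq0 (by simp only [ne_eq, Fin.mk.injEq]; omega)
      (by simp only [ne_eq, Fin.mk.injEq]; omega) (by simp only [ne_eq, Fin.mk.injEq]; omega) v
  · exact eAt_comm q (by simp only [ne_eq, Fin.mk.injEq]; omega)
      (by simp only [ne_eq, Fin.mk.injEq]; omega) (by simp only [ne_eq, Fin.mk.injEq]; omega)
      (by simp only [ne_eq, Fin.mk.injEq]; omega) v
end
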